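/- arXiv:2103.12566 — 2 statements merged into one kernel-verified Lean document; each statement's English description precedes it below -/
import Mathlib

section
/- If the circle S¹ is the union of two open, path-connected, proper subsets U and V, then the intersection U ∩ V is not path connected (it has at least two path components). -/
/-!
Pick `a ∉ U` and `b ∉ V`; since `U ∪ V` is the whole circle, `a ∈ V \ U` and `b ∈ U \ V`, so
`a ≠ b`. The two closed arcs `K₁`, `K₂` from `a` to `b` cover the circle and meet only in
`{a, b}`. Each arc is connected, covered by `U ∪ V` and meets both `U` (at `b`) and `V` (at `a`),
so it meets `U ∩ V` away from its endpoints, i.e. outside the other arc. Hence `U ∩ V`, which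
avoids `a` and `b`, is split by the closed cover `K₁ ∪ K₂` into two nonempty parts.
-/

open Set

section Topology

variable {X : Type*} [TopologicalSpace X] {K₁ K₂ U V : Set X} {a b : X}

theorem IsPreconnected.exists_mem_inter_notMem_of_inter_eq_pair (hK₁ : IsPreconnected K₁)
    (hK : K₁ ∩ K₂ = {a, b}) (hU : IsOpen U) (hV : IsOpen V) (hUV : U ∪ V = univ)
    (ha : a ∉ U) (hb : b ∉ V) : ∃ z ∈ U ∩ V, z ∉ K₂ := by
  have haK : a ∈ K₁ := (hK.symm ▸ mem_insert a {b} : a ∈ K₁ ∩ K₂).1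
  have hbK : b ∈ K₁ := (hK.symm ▸ mem_insert_of_mem a rfl : b ∈ K₁ ∩ K₂).1
  have hbU : b ∈ U := (eq_univ_iff_forall.1 hUV b).resolve_right hb
  have haV : a ∈ V := (eq_univ_iff_forall.1 hUV a).resolve_left ha
  obtain ⟨z, hzK, hzUV⟩ :=
    hK₁ U V hU hV (hUV ▸ subset_univ K₁) ⟨b, hbK, hbU⟩ ⟨a, haK, haV⟩
  refine ⟨z, hzUV, fun hzK₂ => ?_⟩
  have hz : z ∈ K₁ ∩ K₂ := ⟨hzK, hzK₂⟩
  rw [hK] at hz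
  rcases hz with rfl | rfl
  exacts [ha hzUV.1, hb hzUV.2]

theorem not_isPreconnected_inter_of_inter_eq_pair (hK₁c : IsClosed K₁) (hK₂c : IsClosed K₂)
    (hK₁ : IsPreconnected K₁) (hK₂ : IsPreconnected K₂) (hK : K₁ ∪ K₂ = univ)
    (hK₁₂ : K₁ ∩ K₂ = {a, b}) (hU : IsOpen U) (hV : IsOpen V) (hUV : U ∪ V = univ)
    (ha : a ∉ U) (hb : b ∉ V) : ¬ IsPreconnected (U ∩ V) := by
  obtain ⟨z, hz, hzK₂⟩ := hK₁.exists_mem_inter_notMem_of_inter_eq_pair hK₁₂ hU hV hUV ha hb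
  obtain ⟨w, ⟨hwV, hwU⟩, hwK₁⟩ := hK₂.exists_mem_inter_notMem_of_inter_eq_pair
    (by rwa [inter_comm, pair_comm]) hV hU (by rwa [union_comm]) hb ha
  intro hUVc
  have hdisj : U ∩ V ∩ (K₁ ∩ K₂) = ∅ := by
    rw [hK₁₂, eq_empty_iff_forall_notMem]
    rintro z ⟨hz, rfl | rfl⟩
    exacts [ha hz.1, hb hz.2]
  rcases isPreconnected_iff_subset_of_disjoint_closed.1 hUVc K₁ K₂ hK₁c hK₂c
    (hK ▸ subset_univ _) hdisj with h | h
  exacts [hwK₁ (h ⟨hwU, hwV⟩), hzK₂ (h hz)]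

theorem exists_not_joinedIn_of_not_isPreconnected {s : Set X} (hs : ¬ IsPreconnected s) :
    ∃ x ∈ s, ∃ y ∈ s, ¬ JoinedIn s x y := by
  by_contra! hjoined
  rcases s.eq_empty_or_nonempty with rfl | hne
  · exact hs isPreconnected_empty
  · exact hs (isPathConnected_iff.2 ⟨hne, hjoined⟩).isConnected.isPreconnected

end Topology

namespace Circle

theorem not_isPreconnected_inter_of_union_eq_univ {U V : Set Circle} {a b : Circle}
    (hab : a ≠ b) (hU : IsOpen U) (hV : IsOpen V) (hUV : U ∪ V = univ)
    (ha : a ∉ U) (hb : b ∉ V) : ¬ IsPreconnected (U ∩ V) :=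
  not_isPreconnected_inter_of_inter_eq_pair
    (isCompact_range (path a b).continuous).isClosed
    (isCompact_range (path b a).continuous).isClosed
    (isPreconnected_range (path a b).continuous) (isPreconnected_range (path b a).continuous)
    (range_path_union_range_path hab) (range_path_inter_range_path hab) hU hV hUV ha hb

end Circle

theorem circle_cover_inter_not_pathConnected_general (U V : Set Circle)
    (hUopen : IsOpen U) (hVopen : IsOpen V) (hUV : U ∪ V = Set.univ)
    (hUproper : U ≠ Set.univ) (hVproper : V ≠ Set.univ) :
    ¬ IsPathConnected (U ∩ V) ∧
      ∃ x ∈ U ∩ V, ∃ y ∈ U ∩ V, ¬ JoinedIn (U ∩ V) x y := by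
  obtain ⟨a, ha⟩ := (ne_univ_iff_exists_notMem U).1 hUproper
  obtain ⟨b, hb⟩ := (ne_univ_iff_exists_notMem V).1 hVproper
  have haV : a ∈ V := (eq_univ_iff_forall.1 hUV a).resolve_left ha
  have hab : a ≠ b := fun h => hb (h ▸ haV)
  obtain ⟨x, hx, y, hy, hxy⟩ := exists_not_joinedIn_of_not_isPreconnected
    (Circle.not_isPreconnected_inter_of_union_eq_univ hab hUopen hVopen hUV ha hb)
  exact ⟨fun h => hxy (h.joinedIn x hx y hy), x, hx, y, hy, hxy⟩

/-- If the circle `S¹` is the union of two open, path-connected, proper subsets `U` and `V`,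
then `U ∩ V` is not path connected: it has at least two path components, i.e. there are two
points of `U ∩ V` which cannot be joined by a path in `U ∩ V`. -/
theorem circle_cover_inter_not_pathConnected (U V : Set Circle)
    (hUopen : IsOpen U) (hVopen : IsOpen V) (hUV : U ∪ V = Set.univ)
    (hUpc : IsPathConnected U) (hVpc : IsPathConnected V)
    (hUproper : U ≠ Set.univ) (hVproper : V ≠ Set.univ) :
    ¬ IsPathConnected (U ∩ V) ∧
      ∃ x ∈ U ∩ V, ∃ y ∈ U ∩ V, ¬ JoinedIn (U ∩ V) x y :=
  circle_cover_inter_not_pathConnected_general U V hUopen hVopen hUV hUproper hVproper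
end

section
/- (Interchange law for the two compositions of filled squares) Let μ : M → P be a crossed module. Let m, n, u, w ∈ M and b, e, r, s ∈ P satisfy μ(w) = s⁻¹e⁻¹br. Then ((s⁻¹ • u) · w) · (r⁻¹ • ((b⁻¹ • n) · m)) = (s⁻¹ • (u · (e⁻¹ • n))) · (w · (r⁻¹ • m)). (This is the identity expressing that composing a 2×2 grid of filled squares horizontally first and then vertically agrees with composing vertically first and then horizontally; its proof uses axiom CM2.) -/
/-! CM2 says that conjugating by `w ∈ M` is acting by `μ w`. Expanding both sides with the
action, the two composites differ only in the order of the middle factors `w` and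
`(r⁻¹ b⁻¹) • n` versus `(s⁻¹ e⁻¹) • n` and `w`; moving `w` across the first factor twists it
by `μ w`, and the hypothesis on `μ w` is exactly what makes the twist turn `r⁻¹ b⁻¹`
into `s⁻¹ e⁻¹`. -/

theorem mul_smul_eq_smul_mul_of_conj_eq_smul {M P : Type*} [Group M] [Group P]
    [MulAction P M] (μ : M → P) (CM2 : ∀ m n : M, μ m • n = m * n * m⁻¹)
    (w n : M) (q : P) :
    w * (q • n) = ((μ w * q) • n) * w := by
  rw [mul_smul, CM2]
  group

theorem filled_squares_interchange_general {M P : Type*} [Group M] [Group P]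
    [MulDistribMulAction P M] (μ : M →* P)
    (CM2 : ∀ m n : M, μ m • n = m * n * m⁻¹)
    (m n u w : M) (b e r s : P) (hw : μ w = s⁻¹ * e⁻¹ * b * r) :
    ((s⁻¹ • u) * w) * (r⁻¹ • ((b⁻¹ • n) * m)) =
      (s⁻¹ • (u * (e⁻¹ • n))) * (w * (r⁻¹ • m)) := by
  have twist : μ w * (r⁻¹ * b⁻¹) = s⁻¹ * e⁻¹ := by
    rw [hw]
    group
  calc ((s⁻¹ • u) * w) * (r⁻¹ • ((b⁻¹ • n) * m))
      = (s⁻¹ • u) * (w * ((r⁻¹ * b⁻¹) • n)) * (r⁻¹ • m) := by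
        rw [smul_mul', smul_smul]
        group
    _ = (s⁻¹ • u) * (((s⁻¹ * e⁻¹) • n) * w) * (r⁻¹ • m) := by
        rw [mul_smul_eq_smul_mul_of_conj_eq_smul μ CM2 w n, twist]
    _ = (s⁻¹ • (u * (e⁻¹ • n))) * (w * (r⁻¹ • m)) := by
        rw [smul_mul', smul_smul]
        group

/-- **Interchange law for the two compositions of filled squares.**
Let `μ : M → P` be a crossed module (here: groups `M`, `P`, a left action of `P` on `M`
by group automorphisms, and a morphism `μ` satisfying CM1 and CM2).  If
`μ w = s⁻¹ e⁻¹ b r`, then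
`((s⁻¹ • u) * w) * (r⁻¹ • ((b⁻¹ • n) * m)) = (s⁻¹ • (u * (e⁻¹ • n))) * (w * (r⁻¹ • m))`. -/
theorem filled_squares_interchange {M P : Type*} [Group M] [Group P]
    [MulDistribMulAction P M] (μ : M →* P)
    (CM1 : ∀ (p : P) (m : M), μ (p • m) = p * μ m * p⁻¹)
    (CM2 : ∀ m n : M, μ m • n = m * n * m⁻¹)
    (m n u w : M) (b e r s : P) (hw : μ w = s⁻¹ * e⁻¹ * b * r) :
    ((s⁻¹ • u) * w) * (r⁻¹ • ((b⁻¹ • n) * m)) =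
      (s⁻¹ • (u * (e⁻¹ • n))) * (w * (r⁻¹ • m)) :=
  filled_squares_interchange_general μ CM2 m n u w b e r s hw
end
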